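/- arXiv:2602.11691 — 2 statements merged into one kernel-verified Lean document; each statement's English description precedes it below -/
import Mathlib

section
/- Single-price optimality under balanced acceptance: let c ∈ ℝᵐ be seller costs and v ∈ ℝⁿ be buyer values, and suppose a price p satisfies: exactly k sellers have cost ≤ p and exactly k buyers have value ≥ p. Then k equals the efficient trade size k* (the largest index ℓ ≤ min(m,n) with v_(ℓ) ≥ c_(ℓ), or 0 if none exists), and hence ∑_{ℓ=1}^{k}(v_(ℓ) − c_(ℓ)) equals the optimal gains-from-trade ∑_{ℓ=1}^{k*}(v_(ℓ) − c_(ℓ)). -/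
/-- The `ℓ`-th largest entry of `v` (1-indexed). -/
noncomputable def kthLargest {n : ℕ} (v : Fin n → ℝ) (k : ℕ) : ℝ :=
  ((List.ofFn v).insertionSort (· ≥ ·)).getD (k - 1) 0

/-- The `ℓ`-th smallest entry of `c` (1-indexed). -/
noncomputable def kthSmallest {n : ℕ} (c : Fin n → ℝ) (k : ℕ) : ℝ :=
  ((List.ofFn c).insertionSort (· ≤ ·)).getD (k - 1) 0

open scoped Classical in
/-- Efficient trade size: the largest `ℓ ≤ min m n` with `v_(ℓ) ≥ c_(ℓ)`, or `0`. -/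
noncomputable def kstar {m n : ℕ} (c : Fin m → ℝ) (v : Fin n → ℝ) : ℕ :=
  ((Finset.Icc 1 (min m n)).filter
    (fun ℓ => kthSmallest c ℓ ≤ kthLargest v ℓ)).sup id

/-!
Sorting puts the sellers who accept `p` first, so `c_(ℓ) ≤ p ↔ ℓ ≤ #{i | c i ≤ p} = k`, and
likewise `p ≤ v_(ℓ) ↔ ℓ ≤ k`. Hence `c_(ℓ) ≤ p ≤ v_(ℓ)` for `ℓ ≤ k` while `v_(ℓ) < p < c_(ℓ)` for
`ℓ > k`: the indices with `c_(ℓ) ≤ v_(ℓ)` are exactly `1, …, k`, so `k* = k`.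
-/

open Finset

theorem List.countP_ofFn {α : Type*} {n : ℕ} (f : Fin n → α) (q : α → Prop) [DecidablePred q] :
    (List.ofFn f).countP q = #{i | q (f i)} := by
  rw [← Multiset.coe_countP, ← Fin.univ_val_map, Multiset.countP_map]
  rfl

theorem List.Pairwise.getElem_iff_lt_countP {α : Type*} {r : α → α → Prop} {q : α → Prop}
    [DecidablePred q] (hq : ∀ a b, r a b → q b → q a) {l : List α} (hl : l.Pairwise r)
    {i : ℕ} (hi : i < l.length) : q l[i] ↔ i < l.countP q := by
  induction l generalizing i with
  | nil => simp at hi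
  | cons a t ih =>
    obtain ⟨ha, ht⟩ := List.pairwise_cons.1 hl
    by_cases hqa : q a
    · cases i with
      | zero => simp [hqa]
      | succ j => simpa [List.countP_cons, hqa] using ih ht (by simpa using hi)
    · have hnone : ∀ b ∈ a :: t, ¬ q b := by
        rintro b (_ | ⟨_, hb⟩)
        exacts [hqa, fun hqb => hqa (hq a b (ha b hb) hqb)]
      have hzero : (a :: t).countP q = 0 :=
        List.countP_eq_zero.2 fun b hb => by simpa using hnone b hb
      simp only [hzero, Nat.not_lt_zero, iff_false]
      exact hnone _ (List.getElem_mem hi)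

theorem kthSmallest_le_iff {m : ℕ} (c : Fin m → ℝ) (p : ℝ) {ℓ : ℕ} (hℓ : ℓ ∈ Icc 1 m) :
    kthSmallest c ℓ ≤ p ↔ ℓ ≤ #{i | c i ≤ p} := by
  have hperm := List.perm_insertionSort (· ≤ ·) (List.ofFn c)
  have hlen : ℓ - 1 < ((List.ofFn c).insertionSort (· ≤ ·)).length := by
    rw [hperm.length_eq, List.length_ofFn]; grind
  rw [kthSmallest, List.getD_eq_getElem _ _ hlen,
    (List.pairwise_insertionSort _ _).getElem_iff_lt_countP (q := (· ≤ p))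
      (fun _ _ => le_trans) hlen,
    hperm.countP_eq, List.countP_ofFn]
  grind

theorem le_kthLargest_iff {n : ℕ} (v : Fin n → ℝ) (p : ℝ) {ℓ : ℕ} (hℓ : ℓ ∈ Icc 1 n) :
    p ≤ kthLargest v ℓ ↔ ℓ ≤ #{j | p ≤ v j} := by
  have hperm := List.perm_insertionSort (· ≥ ·) (List.ofFn v)
  have hlen : ℓ - 1 < ((List.ofFn v).insertionSort (· ≥ ·)).length := by
    rw [hperm.length_eq, List.length_ofFn]; grind
  rw [kthLargest, List.getD_eq_getElem _ _ hlen,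
    (List.pairwise_insertionSort _ _).getElem_iff_lt_countP (q := (p ≤ ·))
      (fun _ _ hab hb => hb.trans hab) hlen,
    hperm.countP_eq, List.countP_ofFn]
  grind

theorem kstar_eq_of_forall_iff {m n : ℕ} (c : Fin m → ℝ) (v : Fin n → ℝ) {k : ℕ}
    (hk : k ≤ min m n)
    (h : ∀ ℓ ∈ Icc 1 (min m n), kthSmallest c ℓ ≤ kthLargest v ℓ ↔ ℓ ≤ k) :
    kstar c v = k := by
  classical
  have hfilter : {ℓ ∈ Icc 1 (min m n) | kthSmallest c ℓ ≤ kthLargest v ℓ} = Icc 1 k := by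
    ext ℓ
    have := h ℓ
    simp only [mem_filter, mem_Icc] at this ⊢
    grind
  rw [kstar, filter_congr_decidable, hfilter]
  refine le_antisymm (Finset.sup_le fun ℓ hℓ => (mem_Icc.1 hℓ).2) ?_
  rcases k.eq_zero_or_pos with rfl | hk0
  · exact Nat.zero_le _
  · exact Finset.le_sup (f := id) (mem_Icc.2 ⟨hk0, le_rfl⟩)

theorem kthSmallest_le_kthLargest_iff {m n : ℕ} (c : Fin m → ℝ) (v : Fin n → ℝ) (p : ℝ) {k : ℕ}
    (hs : #{i | c i ≤ p} = k) (hb : #{j | p ≤ v j} = k) {ℓ : ℕ} (hℓ : ℓ ∈ Icc 1 (min m n)) :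
    kthSmallest c ℓ ≤ kthLargest v ℓ ↔ ℓ ≤ k := by
  simp only [mem_Icc, le_min_iff] at hℓ
  have hc := hs ▸ kthSmallest_le_iff c p (mem_Icc.2 ⟨hℓ.1, hℓ.2.1⟩)
  have hv := hb ▸ le_kthLargest_iff v p (mem_Icc.2 ⟨hℓ.1, hℓ.2.2⟩)
  refine ⟨fun hle => ?_, fun hle => (hc.2 hle).trans (hv.2 hle)⟩
  by_contra hgt
  linarith [not_le.1 (hc.not.2 hgt), not_le.1 (hv.not.2 hgt)]

open scoped Classical in
theorem single_price_optimality {m n : ℕ} (c : Fin m → ℝ) (v : Fin n → ℝ)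
    (p : ℝ) (k : ℕ)
    (hs : (Finset.univ.filter (fun i => c i ≤ p)).card = k)
    (hb : (Finset.univ.filter (fun j => p ≤ v j)).card = k) :
    k = kstar c v ∧
      ∑ ℓ ∈ Finset.Icc 1 k, (kthLargest v ℓ - kthSmallest c ℓ) =
        ∑ ℓ ∈ Finset.Icc 1 (kstar c v), (kthLargest v ℓ - kthSmallest c ℓ) := by
  have hkm : k ≤ m := hs ▸ (card_le_univ _).trans_eq (Fintype.card_fin m)
  have hkn : k ≤ n := hb ▸ (card_le_univ _).trans_eq (Fintype.card_fin n)
  have hk : kstar c v = k := kstar_eq_of_forall_iff c v (le_min hkm hkn)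
    fun _ hℓ => kthSmallest_le_kthLargest_iff c v p hs hb hℓ
  exact ⟨hk.symm, by rw [hk]⟩
end

section
/- Phase-interval lower-bound recurrence: let ε_k = 2^{-2^{k+2}} and suppose a sequence of interval lengths satisfies L_0 = ε_{ℓ-1} and L_i ≥ (1/4)·L_{i-1} − ε_{ℓ+i-1} for all i ≥ 1 (with ℓ ≥ 1). Then for all i ≥ 0, L_i ≥ (1/4)^{i+1}·ε_{ℓ-1}. -/
/-- `eps k = 2^{-2^{k+2}}`. -/
noncomputable def eps (k : ℕ) : ℝ := (1 / 2 : ℝ) ^ (2 ^ (k + 2))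

/-
Rescale by `4^i`: each step of the recurrence loses at most `4^(i+1) ε_{m+i+1}`. Because
`ε_{m+i+1} = ε_m ^ (2^(i+1))` decays doubly exponentially, this loss is at most
`2^{-(i+2)} ε_m`, so the rescaled lengths stay above `(1/2 + 2^{-(i+1)}) ε_m ≥ ε_m / 4`.
-/

lemma three_mul_add_four_add_two_pow_le (m i : ℕ) :
    3 * i + 4 + 2 ^ (m + 2) ≤ 2 ^ (m + i + 3) := by
  have h4 : 4 ≤ 2 ^ (m + 2) := by
    calc 4 = 2 ^ 2 := by norm_num
      _ ≤ 2 ^ (m + 2) := Nat.pow_le_pow_right (by norm_num) (by omega)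
  have hi : i + 2 ≤ 2 ^ (i + 1) := Nat.lt_two_pow_self
  have hsplit : 2 ^ (m + i + 3) = 2 ^ (m + 2) * 2 ^ (i + 1) := by rw [← pow_add]; ring_nf
  nlinarith

lemma eps_nonneg (k : ℕ) : 0 ≤ eps k := by
  unfold eps; positivity

lemma eps_add_succ_le (m i : ℕ) : eps (m + i + 1) ≤ (1 / 2 : ℝ) ^ (3 * i + 4) * eps m := by
  unfold eps
  rw [← pow_add]
  refine pow_le_pow_of_le_one (by norm_num) (by norm_num) ?_
  have := three_mul_add_four_add_two_pow_le m i
  rw [show m + i + 1 + 2 = m + i + 3 by ring]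
  omega

theorem lower_bound_of_div_four_sub_eps_le (m : ℕ) (L : ℕ → ℝ) (h0 : eps m ≤ L 0)
    (hrec : ∀ i, L i / 4 - eps (m + i + 1) ≤ L (i + 1)) (i : ℕ) :
    (1 / 2 + (1 / 2 : ℝ) ^ (i + 1)) * (1 / 4 : ℝ) ^ i * eps m ≤ L i := by
  induction i with
  | zero => norm_num [h0]
  | succ i ih =>
    have hdecay := eps_add_succ_le m i
    have h2 : (1 / 2 : ℝ) ^ (3 * i + 4) = (1 / 2) ^ (i + 2) * (1 / 4) ^ (i + 1) := by
      rw [show (1 / 4 : ℝ) = (1 / 2) ^ 2 by norm_num, ← pow_mul, ← pow_add]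
      ring_nf
    calc (1 / 2 + (1 / 2 : ℝ) ^ (i + 1 + 1)) * (1 / 4) ^ (i + 1) * eps m
        = (1 / 2 + (1 / 2 : ℝ) ^ (i + 1)) * (1 / 4) ^ i * eps m / 4
            - (1 / 2) ^ (3 * i + 4) * eps m := by rw [h2]; ring
      _ ≤ L i / 4 - eps (m + i + 1) := by linarith
      _ ≤ L (i + 1) := hrec i

theorem phase_interval_lower_bound (ℓ : ℕ) (hℓ : 1 ≤ ℓ) (L : ℕ → ℝ)
    (h0 : L 0 = eps (ℓ - 1))
    (hrec : ∀ i : ℕ, 1 ≤ i → L i ≥ L (i - 1) / 4 - eps (ℓ + i - 1)) :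
    ∀ i : ℕ, L i ≥ (1 / 4 : ℝ) ^ (i + 1) * eps (ℓ - 1) := by
  obtain ⟨m, rfl⟩ : ∃ m, ℓ = m + 1 := ⟨ℓ - 1, by omega⟩
  have hrec' : ∀ i, L i / 4 - eps (m + i + 1) ≤ L (i + 1) := fun i => by
    simpa [show m + 1 + (i + 1) - 1 = m + i + 1 by omega] using hrec (i + 1) (by omega)
  intro i
  have hbound := lower_bound_of_div_four_sub_eps_le m L (by simp [h0]) hrec' i
  have hε := eps_nonneg m
  calc (1 / 4 : ℝ) ^ (i + 1) * eps (m + 1 - 1)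
      ≤ (1 / 2 + (1 / 2 : ℝ) ^ (i + 1)) * (1 / 4 : ℝ) ^ i * eps m := by
        rw [Nat.add_sub_cancel, pow_succ']
        gcongr
        linarith [pow_pos (by norm_num : (0 : ℝ) < 1 / 2) (i + 1)]
    _ ≤ L i := hbound
end
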